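/- arXiv:2112.02317 — 2 statements merged into one kernel-verified Lean document; each statement's English description precedes it below -/
import Mathlib

section
/- Let a and b be positive real numbers and set A = (√(2π) / Γ(a/b)) · e^{1 - a/b} · b^{1/2 - a/b}. Then, as n → ∞ through the natural numbers, the product ∏_{k=0}^{n-1} (a + k·b) is asymptotically equivalent to A · (a - b + b·n)^{a/b + n - 1/2} · e^{-n}; that is, the quotient of the two sequences tends to 1. (Determination of Euler's constant A, solving Faber's task.) -/
/-!
With `x = a / b` the product is `b ^ n * x (x + 1) ⋯ (x + n - 1)`. Euler's limit formula
`Γ(x) = lim n ^ x n! / (x (x + 1) ⋯ (x + n))` and Stirling's formula for `n!` give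
`x (x + 1) ⋯ (x + n - 1) ~ √(2π) / Γ(x) · n ^ (n + x - 1/2) e ^ (-n)`, and since
`(n + x - 1) ^ (n + x - 1/2) ~ e ^ (x - 1) n ^ (n + x - 1/2)` this is Euler's form with the
constant `√(2π) e ^ (1 - x) / Γ(x)`. Finally `a - b + b n = b (n + x - 1)`, and the powers of
`b` combine as `b ^ (1/2 - x) · b ^ (n + x - 1/2) = b ^ n`.
-/

open Filter Asymptotics Real Topology Nat

theorem prod_range_add_mul_eq_pow_mul {K : Type*} [Field K] (a : K) {b : K} (hb : b ≠ 0)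
    (n : ℕ) :
    ∏ k ∈ Finset.range n, (a + k * b) = b ^ n * ∏ k ∈ Finset.range n, (a / b + k) := by
  rw [show b ^ n = ∏ _k ∈ Finset.range n, b by simp, ← Finset.prod_mul_distrib]
  refine Finset.prod_congr rfl fun k _ => ?_
  field_simp

namespace Real

theorem prod_range_add_natCast_isEquivalent_factorial {x : ℝ} (hx : Gamma x ≠ 0) :
    (fun n : ℕ => ∏ k ∈ Finset.range n, (x + k)) ~[atTop]
      fun n => (n : ℝ) ^ (x - 1) * n ! / Gamma x := by
  have hfrac : (fun n : ℕ => (n : ℝ) / (n + x)) ~[atTop] Function.const ℕ (1 : ℝ) :=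
    (isEquivalent_const_iff_tendsto one_ne_zero).2 (tendsto_natCast_div_add_atTop x)
  have hseq : GammaSeq x ~[atTop] Function.const ℕ (Gamma x) :=
    (isEquivalent_const_iff_tendsto hx).2 (GammaSeq_tendsto_Gamma x)
  have hx_add : ∀ n : ℕ, x + n ≠ 0 := fun n h =>
    hx ((Gamma_eq_zero_iff x).2 ⟨n, by linarith⟩)
  calc (fun n : ℕ => ∏ k ∈ Finset.range n, (x + k))
      =ᶠ[atTop] fun n => (n : ℝ) ^ (x - 1) * n ! * ((n : ℝ) / (n + x)) / GammaSeq x n := by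
        filter_upwards [eventually_gt_atTop 0] with n hn
        have hn' : (0 : ℝ) < n := by exact_mod_cast hn
        have hP : ∏ k ∈ Finset.range n, (x + k) ≠ 0 :=
          Finset.prod_ne_zero_iff.2 fun k _ => hx_add k
        have hnx : (n : ℝ) + x ≠ 0 := by rw [add_comm]; exact hx_add n
        rw [GammaSeq, Finset.prod_range_succ, rpow_sub_one hn'.ne']
        field_simp
        ring
    _ ~[atTop] fun n => (n : ℝ) ^ (x - 1) * n ! * 1 / Gamma x :=
        (IsEquivalent.refl.mul hfrac).div hseq
    _ = fun n : ℕ => (n : ℝ) ^ (x - 1) * n ! / Gamma x := by simp_rw [mul_one]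

theorem prod_range_add_natCast_isEquivalent_stirling {x : ℝ} (hx : Gamma x ≠ 0) :
    (fun n : ℕ => ∏ k ∈ Finset.range n, (x + k)) ~[atTop]
      fun n => √(2 * π) / Gamma x * (n : ℝ) ^ ((n : ℝ) + (x - 1 / 2)) * exp (-n) :=
  calc (fun n : ℕ => ∏ k ∈ Finset.range n, (x + k))
      ~[atTop] fun n => (n : ℝ) ^ (x - 1) * n ! / Gamma x :=
        prod_range_add_natCast_isEquivalent_factorial hx
    _ ~[atTop] fun n => (n : ℝ) ^ (x - 1) * (√(2 * n * π) * (n / exp 1) ^ n) / Gamma x :=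
        (IsEquivalent.refl.mul Stirling.factorial_isEquivalent_stirling).div IsEquivalent.refl
    _ =ᶠ[atTop] fun n =>
          √(2 * π) / Gamma x * (n : ℝ) ^ ((n : ℝ) + (x - 1 / 2)) * exp (-n) := by
        filter_upwards [eventually_gt_atTop 0] with n hn
        have hn' : (0 : ℝ) < n := by exact_mod_cast hn
        have hpow :
            (n : ℝ) ^ ((n : ℝ) + (x - 1 / 2)) = (n : ℝ) ^ (x - 1) * √n * (n : ℝ) ^ n := by
          rw [sqrt_eq_rpow, ← rpow_natCast, ← rpow_add hn', ← rpow_add hn']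
          ring_nf
        rw [hpow, div_pow, exp_one_pow, exp_neg, mul_comm 2 (n : ℝ), mul_assoc, sqrt_mul hn'.le]
        field_simp

theorem tendsto_one_add_div_natCast_rpow (c d : ℝ) :
    Tendsto (fun n : ℕ => (1 + c / n) ^ ((n : ℝ) + d)) atTop (𝓝 (exp c)) := by
  have hbase : Tendsto (fun n : ℕ => 1 + c / n) atTop (𝓝 1) := by
    simpa using tendsto_const_nhds.add (tendsto_const_div_atTop_nhds_zero_nat c)
  have hmain := ((tendsto_one_add_div_rpow_exp c).comp tendsto_natCast_atTop_atTop).mul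
    (hbase.rpow_const (p := d) (Or.inl one_ne_zero))
  rw [one_rpow, mul_one] at hmain
  refine hmain.congr' ?_
  filter_upwards [hbase.eventually (lt_mem_nhds one_pos)] with n hn
  exact (rpow_add hn _ _).symm

theorem natCast_add_rpow_isEquivalent (c d : ℝ) :
    (fun n : ℕ => ((n : ℝ) + c) ^ ((n : ℝ) + d)) ~[atTop]
      fun n => exp c * (n : ℝ) ^ ((n : ℝ) + d) := by
  have hlim : (fun n : ℕ => (1 + c / n) ^ ((n : ℝ) + d)) ~[atTop] Function.const ℕ (exp c) :=
    (isEquivalent_const_iff_tendsto (exp_ne_zero c)).2 (tendsto_one_add_div_natCast_rpow c d)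
  calc (fun n : ℕ => ((n : ℝ) + c) ^ ((n : ℝ) + d))
      =ᶠ[atTop] fun n => (n : ℝ) ^ ((n : ℝ) + d) * (1 + c / n) ^ ((n : ℝ) + d) := by
        filter_upwards [eventually_gt_atTop 0, (tendsto_atTop_add_const_right _ c
          tendsto_natCast_atTop_atTop).eventually_gt_atTop 0] with n hn hc
        have hn' : (0 : ℝ) < n := by exact_mod_cast hn
        have hc' : 0 ≤ 1 + c / n := by rw [one_add_div hn'.ne']; positivity
        rw [← mul_rpow hn'.le hc', mul_add, mul_div_cancel₀ _ hn'.ne', mul_one]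
    _ ~[atTop] fun n => (n : ℝ) ^ ((n : ℝ) + d) * exp c := IsEquivalent.refl.mul hlim
    _ = fun n : ℕ => exp c * (n : ℝ) ^ ((n : ℝ) + d) := by simp_rw [mul_comm]

theorem prod_range_add_natCast_isEquivalent {x : ℝ} (hx : Gamma x ≠ 0) :
    (fun n : ℕ => ∏ k ∈ Finset.range n, (x + k)) ~[atTop] fun n => √(2 * π) / Gamma x *
      exp (1 - x) * ((n : ℝ) + (x - 1)) ^ ((n : ℝ) + (x - 1 / 2)) * exp (-n) :=
  calc (fun n : ℕ => ∏ k ∈ Finset.range n, (x + k))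
      ~[atTop] fun n => √(2 * π) / Gamma x * (n : ℝ) ^ ((n : ℝ) + (x - 1 / 2)) * exp (-n) :=
        prod_range_add_natCast_isEquivalent_stirling hx
    _ = fun n : ℕ => √(2 * π) / Gamma x * exp (1 - x) *
          (exp (x - 1) * (n : ℝ) ^ ((n : ℝ) + (x - 1 / 2))) * exp (-n) := by
        funext n
        have hexp : exp (1 - x) * exp (x - 1) = 1 := by rw [← exp_add]; simp
        linear_combination
          -(√(2 * π) / Gamma x * (n : ℝ) ^ ((n : ℝ) + (x - 1 / 2)) * exp (-n)) * hexp
    _ ~[atTop] fun n => √(2 * π) / Gamma x * exp (1 - x) *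
          ((n : ℝ) + (x - 1)) ^ ((n : ℝ) + (x - 1 / 2)) * exp (-n) :=
        (IsEquivalent.refl.mul (natCast_add_rpow_isEquivalent _ _).symm).mul IsEquivalent.refl

end Real

theorem euler_constant_A (a b : ℝ) (ha : 0 < a) (hb : 0 < b) (A : ℝ)
    (hA : A = (Real.sqrt (2 * Real.pi) / Real.Gamma (a / b)) *
        Real.exp (1 - a / b) * b ^ ((1 : ℝ) / 2 - a / b)) :
    (fun n : ℕ => ∏ k ∈ Finset.range n, (a + k * b)) ~[atTop]
      (fun n : ℕ =>
        A * (a - b + b * n) ^ (a / b + n - 1 / 2) * Real.exp (-(n : ℝ))) := by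
  have hx : 0 < a / b := div_pos ha hb
  calc (fun n : ℕ => ∏ k ∈ Finset.range n, (a + k * b))
      = fun n : ℕ => b ^ n * ∏ k ∈ Finset.range n, (a / b + k) :=
        funext (prod_range_add_mul_eq_pow_mul a hb.ne')
    _ ~[atTop] fun n : ℕ => b ^ n * (√(2 * π) / Gamma (a / b) * exp (1 - a / b) *
          ((n : ℝ) + (a / b - 1)) ^ ((n : ℝ) + (a / b - 1 / 2)) * exp (-n)) :=
        IsEquivalent.refl.mul (prod_range_add_natCast_isEquivalent (Gamma_pos_of_pos hx).ne')
    _ =ᶠ[atTop] fun n : ℕ => A * (a - b + b * n) ^ (a / b + n - 1 / 2) * exp (-(n : ℝ)) := by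
        filter_upwards [eventually_ge_atTop 1] with n hn
        have hs : 0 ≤ (n : ℝ) + (a / b - 1) := by
          have : (1 : ℝ) ≤ n := by exact_mod_cast hn
          linarith
        have hb_pow : b ^ ((1 : ℝ) / 2 - a / b) * b ^ ((n : ℝ) + (a / b - 1 / 2)) = b ^ n := by
          rw [← rpow_add hb, ← rpow_natCast]
          ring_nf
        rw [hA, show a - b + b * n = b * ((n : ℝ) + (a / b - 1)) by field_simp; ring,
          show a / b + n - 1 / 2 = (n : ℝ) + (a / b - 1 / 2) by ring, mul_rpow hb.le hs,
          ← hb_pow]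
        ring
end

section
/- Let a and b be positive real numbers. As n → ∞ through the natural numbers, the product ∏_{k=0}^{n-1} (a + k·b) is asymptotically equivalent to (b^n / Γ(a/b)) · √(2π) · (n + a/b - 1)^{n + a/b - 1/2} · e^{-(n + a/b - 1)}; that is, the quotient of the two sequences tends to 1. (The intermediate asymptotic obtained by applying Stirling's formula to the Gamma-function representation of Γ_E.) -/
/-!
Dividing out `b` leaves the rising factorial `x (x + 1) ⋯ (x + n - 1)` with `x = a / b`.
Euler's limit formula `Γ(x) = lim n^x n! / (x (x + 1) ⋯ (x + n))` and Stirling's formula for `n!`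
give `x (x + 1) ⋯ (x + n - 1) ~ √(2π) n^(n + x - 1/2) e^(-n) / Γ(x)`, and replacing `n` by
`n + x - 1` in `n^(n + s) e^(-n)` only costs the factor `(1 + (x - 1)/n)^(n + s) e^(1 - x) → 1`.
-/

open Filter Asymptotics Real Topology Nat

theorem prod_add_mul_eq_pow_mul_prod_div_add (a b : ℝ) (hb : b ≠ 0) (n : ℕ) :
    ∏ k ∈ Finset.range n, (a + k * b) = b ^ n * ∏ k ∈ Finset.range n, (a / b + k) := by
  calc ∏ k ∈ Finset.range n, (a + k * b) = ∏ k ∈ Finset.range n, b * (a / b + k) :=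
        Finset.prod_congr rfl fun k _ => by field_simp
    _ = _ := by rw [Finset.prod_mul_distrib, Finset.prod_const, Finset.card_range]

theorem tendsto_one_add_div_rpow_add_exp (c s : ℝ) :
    Tendsto (fun n : ℕ => (1 + c / n) ^ ((n : ℝ) + s)) atTop (𝓝 (exp c)) := by
  have hbase : Tendsto (fun n : ℕ => 1 + c / n) atTop (𝓝 1) := by
    simpa using tendsto_const_nhds.add (tendsto_const_div_atTop_nhds_zero_nat c)
  have hshift : Tendsto (fun n : ℕ => (1 + c / n) ^ s) atTop (𝓝 1) := by
    simpa using hbase.rpow_const (Or.inl one_ne_zero)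
  have hprod := (tendsto_one_add_div_pow_exp c).mul hshift
  rw [mul_one] at hprod
  refine hprod.congr' ?_
  filter_upwards [hbase.eventually (eventually_gt_nhds zero_lt_one)] with n hpos
  rw [rpow_add hpos, rpow_natCast]

theorem add_rpow_add_mul_exp_neg_isEquivalent (c s : ℝ) :
    (fun n : ℕ => ((n : ℝ) + c) ^ ((n : ℝ) + s) * exp (-((n : ℝ) + c))) ~[atTop]
      fun n : ℕ => (n : ℝ) ^ ((n : ℝ) + s) * exp (-(n : ℝ)) := by
  have hratio : (fun n : ℕ => (1 + c / n) ^ ((n : ℝ) + s) * exp (-c)) ~[atTop] 1 := by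
    refine (isEquivalent_const_iff_tendsto one_ne_zero).mpr ?_
    have h := (tendsto_one_add_div_rpow_add_exp c s).mul_const (exp (-c))
    rwa [← exp_add, add_neg_cancel, exp_zero] at h
  have h := (IsEquivalent.refl (u := fun n : ℕ => (n : ℝ) ^ ((n : ℝ) + s) * exp (-(n : ℝ)))
    (l := atTop)).mul hratio
  rw [mul_one] at h
  refine h.congr_left ?_
  filter_upwards [tendsto_natCast_atTop_atTop.eventually_gt_atTop |c|] with n hn
  have hn0 : (0 : ℝ) < n := (abs_nonneg c).trans_lt hn
  have hbase : 0 ≤ 1 + c / n := by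
    rw [← div_self hn0.ne', ← add_div]
    exact div_nonneg (by linarith [neg_abs_le c]) hn0.le
  have hsplit : ((n : ℝ) + c) ^ ((n : ℝ) + s) =
      (n : ℝ) ^ ((n : ℝ) + s) * (1 + c / n) ^ ((n : ℝ) + s) := by
    rw [← mul_rpow hn0.le hbase, mul_one_add, mul_div_cancel₀ _ hn0.ne']
  simp only [Pi.mul_apply, hsplit, neg_add, exp_add]
  ring

theorem prod_add_natCast_isEquivalent (x : ℝ) (hx : ∀ m : ℕ, x ≠ -m) :
    (fun n : ℕ => ∏ k ∈ Finset.range n, (x + k)) ~[atTop]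
      fun n : ℕ => (n : ℝ) ^ x * n ! / (n * Gamma x) := by
  have hΓ : Gamma x ≠ 0 := Gamma_ne_zero hx
  have hseq : GammaSeq x ~[atTop] fun _ => Gamma x :=
    (isEquivalent_const_iff_tendsto hΓ).mpr (GammaSeq_tendsto_Gamma x)
  have hlin : (fun n : ℕ => x + n) ~[atTop] fun n : ℕ => (n : ℝ) :=
    IsEquivalent.refl.const_add_of_norm_tendsto_atTop
      (tendsto_norm_atTop_atTop.comp tendsto_natCast_atTop_atTop)
  refine (IsEquivalent.refl.div (hlin.mul hseq)).congr_left ?_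
  filter_upwards [eventually_ne_atTop 0] with n hn
  have hprod : ∏ k ∈ Finset.range n, (x + k) ≠ 0 :=
    Finset.prod_ne_zero_iff.mpr fun k _ => by simpa [add_eq_zero_iff_eq_neg] using hx k
  have hlast : x + n ≠ 0 := by simpa [add_eq_zero_iff_eq_neg] using hx n
  have hpow : (n : ℝ) ^ x ≠ 0 := (rpow_pos_of_pos (by positivity) x).ne'
  simp only [Pi.mul_apply, Pi.div_apply, GammaSeq, Finset.prod_range_succ]
  field_simp

theorem rpow_mul_stirling_div_eq (x C : ℝ) {n : ℕ} (hn : n ≠ 0) :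
    (n : ℝ) ^ x * (√(2 * n * π) * (n / exp 1) ^ n) / (n * C) =
      √(2 * π) * (n : ℝ) ^ ((n : ℝ) + (x - 1 / 2)) * exp (-(n : ℝ)) / C := by
  have hn0 : (0 : ℝ) < n := by positivity
  rw [rpow_add hn0, rpow_natCast, rpow_sub hn0, ← sqrt_eq_rpow,
    show 2 * (n : ℝ) * π = 2 * π * n by ring, sqrt_mul (by positivity), div_pow, exp_one_pow,
    exp_neg]
  have : √(n : ℝ) ≠ 0 := by positivity
  field_simp
  rw [sq_sqrt hn0.le]

theorem prod_add_natCast_isEquivalent_stirling (x : ℝ) (hx : ∀ m : ℕ, x ≠ -m) :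
    (fun n : ℕ => ∏ k ∈ Finset.range n, (x + k)) ~[atTop]
      fun n : ℕ =>
        √(2 * π) * (n : ℝ) ^ ((n : ℝ) + (x - 1 / 2)) * exp (-(n : ℝ)) / Gamma x := by
  have hstirling := ((IsEquivalent.refl (u := fun n : ℕ => (n : ℝ) ^ x)).mul
    Stirling.factorial_isEquivalent_stirling).div
      (IsEquivalent.refl (u := fun n : ℕ => (n : ℝ) * Gamma x))
  refine ((prod_add_natCast_isEquivalent x hx).trans hstirling).congr_right ?_
  filter_upwards [eventually_ne_atTop 0] with n hn
  exact rpow_mul_stirling_div_eq x (Gamma x) hn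

theorem euler_gammaE_stirling_asymptotic (a b : ℝ) (ha : 0 < a) (hb : 0 < b) :
    (fun n : ℕ => ∏ k ∈ Finset.range n, (a + k * b)) ~[atTop]
      (fun n : ℕ =>
        (b ^ n / Real.Gamma (a / b)) * Real.sqrt (2 * Real.pi) *
          ((n : ℝ) + a / b - 1) ^ ((n : ℝ) + a / b - 1 / 2) *
          Real.exp (-((n : ℝ) + a / b - 1))) := by
  have hx : ∀ m : ℕ, a / b ≠ -m := fun m h => by
    linarith [div_pos ha hb, (Nat.cast_nonneg m : (0 : ℝ) ≤ m)]
  calc (fun n : ℕ => ∏ k ∈ Finset.range n, (a + k * b))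
      = fun n : ℕ => b ^ n * ∏ k ∈ Finset.range n, (a / b + k) :=
        funext (prod_add_mul_eq_pow_mul_prod_div_add a b hb.ne')
    _ ~[atTop] fun n : ℕ => b ^ n * (√(2 * π) * (n : ℝ) ^ ((n : ℝ) + (a / b - 1 / 2)) *
        exp (-(n : ℝ)) / Gamma (a / b)) :=
        IsEquivalent.refl.mul (prod_add_natCast_isEquivalent_stirling _ hx)
    _ = (fun n : ℕ => b ^ n / Gamma (a / b) * √(2 * π)) *
        fun n : ℕ => (n : ℝ) ^ ((n : ℝ) + (a / b - 1 / 2)) * exp (-(n : ℝ)) := by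
        ext n; simp only [Pi.mul_apply]; ring
    _ ~[atTop] (fun n : ℕ => b ^ n / Gamma (a / b) * √(2 * π)) *
        fun n : ℕ => ((n : ℝ) + (a / b - 1)) ^ ((n : ℝ) + (a / b - 1 / 2)) *
          exp (-((n : ℝ) + (a / b - 1))) :=
        IsEquivalent.refl.mul (add_rpow_add_mul_exp_neg_isEquivalent _ _).symm
    _ = _ := by ext n; simp only [Pi.mul_apply, add_sub_assoc]; ring
end
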